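/- arXiv:1612.03021 — 9 statements merged into one kernel-verified Lean document; each statement's English description precedes it below -/
import Mathlib

section
/- Let R be an associative unital ring, not necessarily commutative. Then R is 2-primal (i.e., N(R) = β(R)) if and only if β(R) = E_R(0) (equality of the prime radical, as a set, with the envelope of zero in R). -/
universe u v w

/-- The envelope of zero in a ring `R`:
`E_R(0) = {r·s : r, s ∈ R, r^k·s = 0 for some positive integer k}`. -/
def ringEnvelopeZero (R : Type u) [Ring R] : Set R :=
  {x | ∃ (r s : R) (k : ℕ), 0 < k ∧ r ^ k * s = 0 ∧ x = r * s}

/-- A two-sided ideal `P` of `R` is prime if it is proper and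
`A·B ⊆ P` implies `A ⊆ P` or `B ⊆ P` for all two-sided ideals `A`, `B`. -/
def IsPrimeTwoSidedIdeal {R : Type u} [Ring R] (P : TwoSidedIdeal R) : Prop :=
  P ≠ ⊤ ∧ ∀ A B : TwoSidedIdeal R, (∀ a ∈ A, ∀ b ∈ B, a * b ∈ P) → A ≤ P ∨ B ≤ P

/-- A two-sided ideal `P` of `R` is completely prime if it is proper and
`a·b ∈ P` implies `a ∈ P` or `b ∈ P`. -/
def IsCompletelyPrimeTwoSidedIdeal {R : Type u} [Ring R] (P : TwoSidedIdeal R) : Prop :=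
  P ≠ ⊤ ∧ ∀ a b : R, a * b ∈ P → a ∈ P ∨ b ∈ P

/-- `β(R)`: the prime radical of `R`, the intersection of all prime two-sided ideals. -/
def ringPrimeRadical (R : Type u) [Ring R] : Set R :=
  {x | ∀ P : TwoSidedIdeal R, IsPrimeTwoSidedIdeal P → x ∈ P}

/-- `β_co(R)`: the completely prime radical of `R`. -/
def ringCompletelyPrimeRadical (R : Type u) [Ring R] : Set R :=
  {x | ∀ P : TwoSidedIdeal R, IsCompletelyPrimeTwoSidedIdeal P → x ∈ P}

/-- A ring is 2-primal if its set of nilpotent elements equals its prime radical. -/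
def IsTwoPrimalRing (R : Type u) [Ring R] : Prop :=
  {x : R | IsNilpotent x} = ringPrimeRadical R

section ModuleDefs

variable {R : Type u} [Ring R] {M : Type v} [AddCommGroup M] [Module R M]

/-- The envelope `E_M(N) = {r·m : r ∈ R, m ∈ M, r^k·m ∈ N for some positive integer k}`. -/
def envelope (N : Submodule R M) : Set M :=
  {x | ∃ (r : R) (m : M) (k : ℕ), 0 < k ∧ r ^ k • m ∈ N ∧ x = r • m}

/-- `P` is a prime submodule of `M`: `P ≠ M` and for every two-sided ideal `A` of `R` and
every submodule `N` of `M`, `A·N ⊆ P` implies `N ⊆ P` or `A·M ⊆ P`. -/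
def IsPrimeSubmodule (P : Submodule R M) : Prop :=
  P ≠ ⊤ ∧ ∀ (A : TwoSidedIdeal R) (N : Submodule R M),
    (∀ a ∈ A, ∀ n ∈ N, a • n ∈ P) → N ≤ P ∨ ∀ a ∈ A, ∀ m : M, a • m ∈ P

/-- `P` is a completely prime submodule of `M`: `P ≠ M` and `r·m ∈ P` implies
`m ∈ P` or `r·M ⊆ P`. -/
def IsCompletelyPrimeSubmodule (P : Submodule R M) : Prop :=
  P ≠ ⊤ ∧ ∀ (r : R) (m : M), r • m ∈ P → m ∈ P ∨ ∀ m' : M, r • m' ∈ P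

/-- `P` is a completely semiprime submodule of `M`: `P ≠ M` and `a²·m ∈ P` implies `a·m ∈ P`. -/
def IsCompletelySemiprimeSubmodule (P : Submodule R M) : Prop :=
  P ≠ ⊤ ∧ ∀ (a : R) (m : M), (a * a) • m ∈ P → a • m ∈ P

/-- `β^s(N)`: the intersection of all prime submodules of `M` containing `N`
(`= M` if there are none). -/
def primeRadicalOf (N : Submodule R M) : Submodule R M :=
  sInf {P : Submodule R M | IsPrimeSubmodule P ∧ N ≤ P}

/-- `β_co^s(N)`: the intersection of all completely prime submodules of `M` containing `N`
(`= M` if there are none). -/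
def cPrimeRadicalOf (N : Submodule R M) : Submodule R M :=
  sInf {P : Submodule R M | IsCompletelyPrimeSubmodule P ∧ N ≤ P}

/-- An element `m` of `M` is strongly nilpotent if `m = a_1·m_1 + … + a_r·m_r` such that for
every `i` and every sequence `a_{i,1}, a_{i,2}, …` with `a_{i,1} = a_i` and
`a_{i,n+1} ∈ a_{i,n}·R·a_{i,n}`, there exists `k` with `a_{i,k}·R·m_i = 0`. -/
def IsStronglyNilpotent (R : Type u) [Ring R] {M : Type v} [AddCommGroup M] [Module R M]
    (m : M) : Prop :=
  ∃ (r : ℕ) (a : Fin r → R) (mi : Fin r → M),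
    m = ∑ i, a i • mi i ∧
    ∀ (i : Fin r) (s : ℕ → R), s 0 = a i → (∀ n, ∃ t : R, s (n + 1) = s n * t * s n) →
      ∃ k, ∀ t : R, (s k * t) • mi i = 0

/-- `N_s(M)`: the set of strongly nilpotent elements of `M`. -/
def stronglyNilpotentSet (R : Type u) [Ring R] (M : Type v) [AddCommGroup M] [Module R M] :
    Set M :=
  {m : M | IsStronglyNilpotent R m}

end ModuleDefs

section Aux

variable {R : Type u} [Ring R]

lemma rad_zero_mem : (0 : R) ∈ ringPrimeRadical R := fun P _ => P.zero_mem

lemma rad_mul_left (a : R) {x : R} (h : x ∈ ringPrimeRadical R) :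
    a * x ∈ ringPrimeRadical R := fun P hP => P.mul_mem_left _ _ (h P hP)

lemma rad_mul_right (a : R) {x : R} (h : x ∈ ringPrimeRadical R) :
    x * a ∈ ringPrimeRadical R := fun P hP => P.mul_mem_right _ _ (h P hP)

/-- Every nilpotent element lies in the envelope of zero. -/
lemma nilpotent_subset_env : {x : R | IsNilpotent x} ⊆ ringEnvelopeZero R := by
  rintro x ⟨n, hn⟩
  exact ⟨x, 1, n + 1, Nat.succ_pos n, by rw [mul_one, pow_succ', hn, mul_zero],
    (mul_one x).symm⟩

section TwoPrimal

variable (H : IsTwoPrimalRing R)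
include H

lemma mem_rad_iff_nilp {x : R} : x ∈ ringPrimeRadical R ↔ IsNilpotent x := by
  unfold IsTwoPrimalRing at H
  rw [← H]; rfl

lemma sq_mem_rad {x : R} (h : x * x ∈ ringPrimeRadical R) : x ∈ ringPrimeRadical R := by
  rw [mem_rad_iff_nilp H] at h ⊢
  obtain ⟨n, hn⟩ := h
  exact ⟨2 * n, by rw [pow_mul, sq, hn]⟩

lemma swap_mem_rad {a b : R} (h : a * b ∈ ringPrimeRadical R) :
    b * a ∈ ringPrimeRadical R := by
  apply sq_mem_rad H
  rw [mul_assoc b a (b * a), ← mul_assoc a b a]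
  exact rad_mul_left b (rad_mul_right a h)

/-- In a 2-primal ring, `r² s ∈ β` implies `r s ∈ β`. -/
lemma rsq_mem_rad {r s : R} (h : r * (r * s) ∈ ringPrimeRadical R) :
    r * s ∈ ringPrimeRadical R := by
  apply sq_mem_rad H
  have h1 : r * s * r ∈ ringPrimeRadical R := swap_mem_rad H h
  rw [show r * s * (r * s) = r * s * r * s from (mul_assoc (r * s) r s).symm]
  exact rad_mul_right s h1

/-- In a 2-primal ring, `r^k s ∈ β` (`k ≥ 1`) implies `r s ∈ β`. -/
lemma pow_mem_rad (k : ℕ) : ∀ r s : R, r ^ (k + 1) * s ∈ ringPrimeRadical R →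
    r * s ∈ ringPrimeRadical R := by
  induction k with
  | zero => intro r s h; rwa [pow_one] at h
  | succ k ih =>
      intro r s h
      have h' : r ^ (k + 1) * (r * s) ∈ ringPrimeRadical R := by
        rwa [pow_succ, mul_assoc] at h
      exact rsq_mem_rad H (ih r (r * s) h')

lemma env_subset_rad : ringEnvelopeZero R ⊆ ringPrimeRadical R := by
  rintro x ⟨r, s, k, hk, hzero, rfl⟩
  obtain ⟨m, rfl⟩ := Nat.exists_eq_add_of_lt hk
  apply pow_mem_rad H m r s
  rw [zero_add] at hzero
  rw [hzero]
  exact rad_zero_mem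

end TwoPrimal

/-- The prime radical consists of nilpotent elements (general fact, via Zorn). -/
lemma rad_subset_nilpotent : ringPrimeRadical R ⊆ {x : R | IsNilpotent x} := by
  intro x hx
  by_contra hn
  -- family of (carriers of) two-sided ideals avoiding all powers of `x`
  set 𝒮 : Set (Set R) :=
    {t | (∃ I : TwoSidedIdeal R, (I : Set R) = t) ∧ ∀ n : ℕ, x ^ n ∉ t} with h𝒮
  have hbot : ((⊥ : TwoSidedIdeal R) : Set R) ∈ 𝒮 := by
    refine ⟨⟨⊥, rfl⟩, ?_⟩
    intro n hmem
    have : x ^ n = 0 := by simpa using hmem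
    exact hn ⟨n, this⟩
  have hchainub : ∀ c ⊆ 𝒮, IsChain (· ⊆ ·) c → c.Nonempty →
      ∃ ub ∈ 𝒮, ∀ s ∈ c, s ⊆ ub := by
    intro c hc hchain hne
    refine ⟨⋃₀ c, ⟨?_, ?_⟩, fun s hs => Set.subset_sUnion_of_mem hs⟩
    · -- the union of a chain of ideals is an ideal
      obtain ⟨t0, ht0⟩ := hne
      obtain ⟨⟨I0, hI0⟩, -⟩ := hc ht0
      refine ⟨TwoSidedIdeal.mk' (⋃₀ c) ?_ ?_ ?_ ?_ ?_, TwoSidedIdeal.coe_mk' _ _ _ _ _ _⟩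
      · exact ⟨t0, ht0, by rw [← hI0]; exact I0.zero_mem⟩
      · rintro a b ⟨ta, hta, ha⟩ ⟨tb, htb, hb⟩
        rcases hchain.total hta htb with hab | hab
        · obtain ⟨⟨J, hJ⟩, -⟩ := hc htb
          subst hJ
          exact ⟨_, htb, J.add_mem (hab ha) hb⟩
        · obtain ⟨⟨J, hJ⟩, -⟩ := hc hta
          subst hJ
          exact ⟨_, hta, J.add_mem ha (hab hb)⟩
      · rintro a ⟨ta, hta, ha⟩
        obtain ⟨⟨J, hJ⟩, -⟩ := hc hta
        subst hJ
        exact ⟨_, hta, J.neg_mem ha⟩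
      · rintro a b ⟨tb, htb, hb⟩
        obtain ⟨⟨J, hJ⟩, -⟩ := hc htb
        subst hJ
        exact ⟨_, htb, J.mul_mem_left _ _ hb⟩
      · rintro a b ⟨ta, hta, ha⟩
        obtain ⟨⟨J, hJ⟩, -⟩ := hc hta
        subst hJ
        exact ⟨_, hta, J.mul_mem_right _ _ ha⟩
    · rintro n ⟨t, ht, hmem⟩
      exact (hc ht).2 n hmem
  obtain ⟨m, -, hm⟩ := zorn_subset_nonempty 𝒮 hchainub _ hbot
  -- `m` is the carrier of a maximal ideal `P` avoiding powers of `x`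
  obtain ⟨⟨P, rfl⟩, hPx⟩ := hm.prop
  -- `P` is prime
  have hPprime : IsPrimeTwoSidedIdeal P := by
    constructor
    · intro htop
      exact hPx 0 (by rw [htop]; trivial)
    · intro A B hAB
      by_contra hcon
      push_neg at hcon
      obtain ⟨hA, hB⟩ := hcon
      rw [TwoSidedIdeal.le_iff, Set.not_subset] at hA hB
      obtain ⟨a, haA, haP⟩ := hA
      obtain ⟨b, hbB, hbP⟩ := hB
      -- the key multiplicative fact : (P ⊔ A) * (P ⊔ B) ⊆ P
      have hK1 : ∀ u ∈ P ⊔ A, ∀ v ∈ B, u * v ∈ P := by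
        let K1 : TwoSidedIdeal R := TwoSidedIdeal.mk' {u | ∀ v ∈ B, u * v ∈ P}
          (fun v hv => by rw [zero_mul]; exact P.zero_mem)
          (fun {u1 u2} h1 h2 v hv => by
            rw [add_mul]; exact P.add_mem (h1 v hv) (h2 v hv))
          (fun {u} h v hv => by rw [neg_mul]; exact P.neg_mem (h v hv))
          (fun {y u} h v hv => by rw [mul_assoc]; exact P.mul_mem_left _ _ (h v hv))
          (fun {u y} h v hv => by
            rw [mul_assoc]; exact h _ (B.mul_mem_left _ _ hv))
        have hle : P ⊔ A ≤ K1 := by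
          apply sup_le
          · intro p hp
            rw [TwoSidedIdeal.mem_mk']
            exact fun v hv => P.mul_mem_right _ _ hp
          · intro u hu
            rw [TwoSidedIdeal.mem_mk']
            exact fun v hv => hAB u hu v hv
        intro u hu v hv
        have := hle hu
        rw [TwoSidedIdeal.mem_mk'] at this
        exact this v hv
      have hK2 : ∀ u ∈ P ⊔ A, ∀ v ∈ P ⊔ B, u * v ∈ P := by
        intro u hu
        let K2 : TwoSidedIdeal R := TwoSidedIdeal.mk' {v | ∀ w ∈ P ⊔ A, w * v ∈ P}
          (fun w hw => by rw [mul_zero]; exact P.zero_mem)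
          (fun {v1 v2} h1 h2 w hw => by
            rw [mul_add]; exact P.add_mem (h1 w hw) (h2 w hw))
          (fun {v} h w hw => by rw [mul_neg]; exact P.neg_mem (h w hw))
          (fun {y v} h w hw => by
            rw [← mul_assoc]; exact h _ ((P ⊔ A).mul_mem_right _ _ hw))
          (fun {v y} h w hw => by rw [← mul_assoc]; exact P.mul_mem_right _ _ (h w hw))
        have hle : P ⊔ B ≤ K2 := by
          apply sup_le
          · intro p hp
            rw [TwoSidedIdeal.mem_mk']
            exact fun w hw => P.mul_mem_left _ _ hp
          · intro v hv
            rw [TwoSidedIdeal.mem_mk']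
            exact fun w hw => hK1 w hw v hv
        intro v hv
        have := hle hv
        rw [TwoSidedIdeal.mem_mk'] at this
        exact this u hu
      -- each of `P ⊔ A`, `P ⊔ B` contains some power of `x`, by maximality
      have hpow : ∀ C : TwoSidedIdeal R, P ≤ C → (∃ c, c ∈ C ∧ c ∉ P) →
          ∃ n : ℕ, x ^ n ∈ C := by
        intro C hPC ⟨c, hcC, hcP⟩
        by_contra hno
        push_neg at hno
        have hmem : ((C : Set R)) ∈ 𝒮 := ⟨⟨C, rfl⟩, hno⟩
        have := hm.2 hmem hPC
        exact hcP (this hcC)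
      obtain ⟨nA, hnA⟩ := hpow (P ⊔ A) le_sup_left
        ⟨a, (le_sup_right : A ≤ P ⊔ A) haA, haP⟩
      obtain ⟨nB, hnB⟩ := hpow (P ⊔ B) le_sup_left
        ⟨b, (le_sup_right : B ≤ P ⊔ B) hbB, hbP⟩
      have : x ^ (nA + nB) ∈ P := by
        rw [pow_add]
        exact hK2 _ hnA _ hnB
      exact hPx _ this
  exact hPx 1 (by simpa using hx P hPprime)

end Aux

/-- `R` is 2-primal (i.e. `N(R) = β(R)`) iff `β(R) = E_R(0)`. -/
theorem stmt0 (R : Type u) [Ring R] :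
    IsTwoPrimalRing R ↔ ringPrimeRadical R = ringEnvelopeZero R := by
  constructor
  · intro H
    apply Set.Subset.antisymm
    · intro x hx
      exact nilpotent_subset_env ((mem_rad_iff_nilp H).mp hx)
    · exact env_subset_rad H
  · intro hE
    apply Set.Subset.antisymm
    · intro x hx
      rw [hE]
      exact nilpotent_subset_env hx
    · exact rad_subset_nilpotent
end

section
/- If R is a 2-primal associative unital ring, then β(R) = N(R) = E_R(0) = β_co(R) (all equalities as subsets of R). -/
universe u v w

section AuxProof

variable {R : Type u} [Ring R]

namespace StmtOneAux

/-- Multiplicative closure of a set. -/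
inductive MulClosure (S : Set R) : R → Prop
  | base {a : R} : a ∈ S → MulClosure S a
  | mul {a b : R} : MulClosure S a → MulClosure S b → MulClosure S (a * b)

/-- Carrier predicate for two-sided ideals. -/
def IsIdealCarrier (s : Set R) : Prop :=
  0 ∈ s ∧ (∀ {x y : R}, x ∈ s → y ∈ s → x + y ∈ s) ∧ (∀ {x : R}, x ∈ s → -x ∈ s) ∧
    (∀ {x y : R}, y ∈ s → x * y ∈ s) ∧ (∀ {x y : R}, x ∈ s → x * y ∈ s)

lemma isIdealCarrier_coe (I : TwoSidedIdeal R) : IsIdealCarrier (I : Set R) :=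
  ⟨I.zero_mem, fun hx hy => I.add_mem hx hy, fun hx => I.neg_mem hx,
    fun hy => I.mul_mem_left _ _ hy, fun hx => I.mul_mem_right _ _ hx⟩

/-- Build a two-sided ideal from a carrier. -/
def ofCarrier (s : Set R) (hs : IsIdealCarrier s) : TwoSidedIdeal R :=
  TwoSidedIdeal.mk' s hs.1 hs.2.1 hs.2.2.1 hs.2.2.2.1 hs.2.2.2.2

lemma mem_ofCarrier {s : Set R} (hs : IsIdealCarrier s) {x : R} :
    x ∈ ofCarrier s hs ↔ x ∈ s :=
  TwoSidedIdeal.mem_mk' _ _ _ _ _ _ x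

lemma coe_ofCarrier {s : Set R} (hs : IsIdealCarrier s) :
    (ofCarrier s hs : Set R) = s :=
  TwoSidedIdeal.coe_mk' _ _ _ _ _ _

lemma nil_mem_prime (h : IsTwoPrimalRing R) {a : R} (ha : IsNilpotent a)
    {P : TwoSidedIdeal R} (hP : IsPrimeTwoSidedIdeal P) : a ∈ P :=
  (Set.ext_iff.mp h a).mp ha P hP

lemma mem_rad_iff (h : IsTwoPrimalRing R) {a : R} :
    IsNilpotent a ↔ a ∈ ringPrimeRadical R := Set.ext_iff.mp h a

lemma nil_mul_left (h : IsTwoPrimalRing R) (r : R) {a : R} (ha : IsNilpotent a) :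
    IsNilpotent (r * a) := by
  rw [mem_rad_iff h] at ha ⊢
  exact fun P hP => P.mul_mem_left _ _ (ha P hP)

lemma nil_mul_right (h : IsTwoPrimalRing R) (r : R) {a : R} (ha : IsNilpotent a) :
    IsNilpotent (a * r) := by
  rw [mem_rad_iff h] at ha ⊢
  exact fun P hP => P.mul_mem_right _ _ (ha P hP)

lemma nil_sq {a : R} (ha : IsNilpotent (a * a)) : IsNilpotent a := by
  obtain ⟨k, hk⟩ := ha
  exact ⟨2 * k, by rw [pow_mul, pow_two]; exact hk⟩

lemma pow_swap (a b : R) (k : ℕ) : (b * a) ^ (k + 1) = b * (a * b) ^ k * a := by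
  induction k with
  | zero => simp
  | succ n ih =>
    rw [pow_succ, ih, pow_succ]
    noncomm_ring

lemma nil_swap {a b : R} (hab : IsNilpotent (a * b)) : IsNilpotent (b * a) := by
  obtain ⟨k, hk⟩ := hab
  exact ⟨k + 1, by rw [pow_swap, hk, mul_zero, zero_mul]⟩

lemma nil_insert (h : IsTwoPrimalRing R) {a b : R} (r : R) (hab : IsNilpotent (a * b)) :
    IsNilpotent (a * r * b) := by
  have hba : IsNilpotent (b * a) := nil_swap hab
  have h1 : IsNilpotent ((a * r) * ((b * a) * (r * b))) :=
    nil_mul_left h _ (nil_mul_right h _ hba)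
  refine nil_sq ?_
  have e : (a * r * b) * (a * r * b) = (a * r) * ((b * a) * (r * b)) := by noncomm_ring
  rw [e]; exact h1

/-- The two-sided ideal generated by `a`. -/
def spanI (a : R) : TwoSidedIdeal R :=
  TwoSidedIdeal.mk' {x | ∀ Q : TwoSidedIdeal R, a ∈ Q → x ∈ Q}
    (fun Q _ => Q.zero_mem)
    (fun hx hy Q hQ => Q.add_mem (hx Q hQ) (hy Q hQ))
    (fun hx Q hQ => Q.neg_mem (hx Q hQ))
    (fun hy Q hQ => Q.mul_mem_left _ _ (hy Q hQ))
    (fun hx Q hQ => Q.mul_mem_right _ _ (hx Q hQ))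

lemma mem_spanI_self (a : R) : a ∈ spanI a := by
  rw [spanI, TwoSidedIdeal.mem_mk']
  exact fun Q hQ => hQ

lemma spanI_le {a : R} {Q : TwoSidedIdeal R} (ha : a ∈ Q) {x : R} (hx : x ∈ spanI a) :
    x ∈ Q := by
  rw [spanI, TwoSidedIdeal.mem_mk'] at hx
  exact hx Q ha

lemma exists_conj {P : TwoSidedIdeal R} (hP : IsPrimeTwoSidedIdeal P)
    {a b : R} (ha : a ∉ P) (hb : b ∉ P) : ∃ r, a * r * b ∉ P := by
  by_contra hc
  push_neg at hc
  have hB : ∀ q ∈ spanI b, ∀ r : R, a * r * q ∈ P := by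
    intro q hq r
    have hCcar : IsIdealCarrier {x : R | ∀ r : R, a * r * x ∈ P} := by
      refine ⟨fun r => by simpa using P.zero_mem, ?_, ?_, ?_, ?_⟩
      · intro x y hx hy r
        have e : a * r * (x + y) = a * r * x + a * r * y := by noncomm_ring
        rw [e]; exact P.add_mem (hx r) (hy r)
      · intro x hx r
        have e : a * r * (-x) = -(a * r * x) := by noncomm_ring
        rw [e]; exact P.neg_mem (hx r)
      · intro x y hy r
        have e : a * r * (x * y) = a * (r * x) * y := by noncomm_ring
        rw [e]; exact hy (r * x)
      · intro x y hx r
        have e : a * r * (x * y) = (a * r * x) * y := by noncomm_ring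
        rw [e]; exact P.mul_mem_right _ _ (hx r)
    have hbC : b ∈ ofCarrier _ hCcar := (mem_ofCarrier hCcar).mpr (fun r => hc r)
    exact (mem_ofCarrier hCcar).mp (spanI_le hbC hq) r
  have hA : ∀ p ∈ spanI a, ∀ q ∈ spanI b, p * q ∈ P := by
    intro p hp
    have hDcar : IsIdealCarrier {x : R | ∀ q ∈ spanI b, x * q ∈ P} := by
      refine ⟨fun q _ => by simpa using P.zero_mem, ?_, ?_, ?_, ?_⟩
      · intro x y hx hy q hq
        have e : (x + y) * q = x * q + y * q := by noncomm_ring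
        rw [e]; exact P.add_mem (hx q hq) (hy q hq)
      · intro x hx q hq
        have e : (-x) * q = -(x * q) := by noncomm_ring
        rw [e]; exact P.neg_mem (hx q hq)
      · intro x y hy q hq
        have e : (x * y) * q = x * (y * q) := by noncomm_ring
        rw [e]; exact P.mul_mem_left _ _ (hy q hq)
      · intro x y hx q hq
        have e : (x * y) * q = x * (y * q) := by noncomm_ring
        rw [e]; exact hx (y * q) ((spanI b).mul_mem_left _ _ hq)
    have haD : a ∈ ofCarrier _ hDcar := by
      rw [mem_ofCarrier]
      intro q hq
      simpa using hB q hq 1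
    exact (mem_ofCarrier hDcar).mp (spanI_le haD hp)
  rcases hP.2 _ _ hA with hle | hle
  · exact ha (hle (mem_spanI_self a))
  · exact hb (hle (mem_spanI_self b))

lemma mulClosure_transfer (h : IsTwoPrimalRing R) {P : TwoSidedIdeal R}
    (hP : IsPrimeTwoSidedIdeal P) {t : R} (ht : MulClosure ((P : Set R))ᶜ t) :
    ∃ t', t' ∉ P ∧ ∀ c d : R, IsNilpotent (c * t * d) → IsNilpotent (c * t' * d) := by
  induction ht with
  | base hmem => exact ⟨_, hmem, fun c d hn => hn⟩
  | @mul a b _ _ ih1 ih2 =>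
    obtain ⟨t₁, ht₁, tr₁⟩ := ih1
    obtain ⟨t₂, ht₂, tr₂⟩ := ih2
    obtain ⟨r, hr⟩ := exists_conj hP ht₁ ht₂
    refine ⟨t₁ * r * t₂, hr, fun c d hcd => ?_⟩
    have s1 : IsNilpotent (c * a * (b * d)) := by
      have e : c * a * (b * d) = c * (a * b) * d := by noncomm_ring
      rw [e]; exact hcd
    have s2 : IsNilpotent ((c * t₁) * b * d) := by
      have e : (c * t₁) * b * d = c * t₁ * (b * d) := by noncomm_ring
      rw [e]; exact tr₁ c (b * d) s1
    have s3 : IsNilpotent ((c * t₁) * (t₂ * d)) := by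
      have e : (c * t₁) * (t₂ * d) = (c * t₁) * t₂ * d := by noncomm_ring
      rw [e]; exact tr₂ (c * t₁) d s2
    have s4 : IsNilpotent ((c * t₁) * r * (t₂ * d)) := nil_insert h r s3
    have e : c * (t₁ * r * t₂) * d = (c * t₁) * r * (t₂ * d) := by noncomm_ring
    rw [e]; exact s4

lemma mulClosure_not_nil (h : IsTwoPrimalRing R) {P : TwoSidedIdeal R}
    (hP : IsPrimeTwoSidedIdeal P) {t : R} (ht : MulClosure ((P : Set R))ᶜ t) :
    ¬ IsNilpotent t := by
  intro hnil
  obtain ⟨t', ht', tr⟩ := mulClosure_transfer h hP ht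
  have h1 : IsNilpotent (1 * t' * 1) := tr 1 1 (by simpa using hnil)
  rw [one_mul, mul_one] at h1
  exact ht' (nil_mem_prime h h1 hP)

lemma one_not_mem_of_prime {P : TwoSidedIdeal R} (hP : IsPrimeTwoSidedIdeal P) :
    (1 : R) ∉ P := fun h1 => hP.1 (P.eq_top h1)

/-- Chain intersection of prime ideal carriers is a prime ideal carrier. -/
lemma chain_inter_prime {c : Set (Set R)}
    (hc : ∀ s ∈ c, ∃ P : TwoSidedIdeal R, IsPrimeTwoSidedIdeal P ∧ (P : Set R) = s)
    (hchain : IsChain (· ⊆ ·) c) (hne : c.Nonempty) :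
    ∃ P : TwoSidedIdeal R, IsPrimeTwoSidedIdeal P ∧ (P : Set R) = ⋂₀ c := by
  have hcar : IsIdealCarrier (⋂₀ c : Set R) := by
    refine ⟨?_, ?_, ?_, ?_, ?_⟩
    · intro s hs
      obtain ⟨Ps, _, hps⟩ := hc s hs
      rw [← hps]; exact Ps.zero_mem
    · intro x y hx hy s hs
      obtain ⟨Ps, _, hps⟩ := hc s hs
      have hx' := hx s hs; have hy' := hy s hs
      rw [← hps] at hx' hy' ⊢
      exact Ps.add_mem hx' hy'
    · intro x hx s hs
      obtain ⟨Ps, _, hps⟩ := hc s hs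
      have hx' := hx s hs
      rw [← hps] at hx' ⊢
      exact Ps.neg_mem hx'
    · intro x y hy s hs
      obtain ⟨Ps, _, hps⟩ := hc s hs
      have hy' := hy s hs
      rw [← hps] at hy' ⊢
      exact Ps.mul_mem_left _ _ hy'
    · intro x y hx s hs
      obtain ⟨Ps, _, hps⟩ := hc s hs
      have hx' := hx s hs
      rw [← hps] at hx' ⊢
      exact Ps.mul_mem_right _ _ hx'
  refine ⟨ofCarrier _ hcar, ⟨?_, ?_⟩, coe_ofCarrier hcar⟩
  · -- proper
    intro htop
    obtain ⟨s₀, hs₀⟩ := hne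
    obtain ⟨P₁, hP₁, hps₁⟩ := hc s₀ hs₀
    have h1 : (1 : R) ∈ ofCarrier _ hcar := htop ▸ TwoSidedIdeal.mem_top _
    rw [mem_ofCarrier] at h1
    have : (1 : R) ∈ s₀ := h1 s₀ hs₀
    rw [← hps₁] at this
    exact one_not_mem_of_prime hP₁ this
  · intro A B hAB
    by_contra hcon
    push_neg at hcon
    obtain ⟨hnA, hnB⟩ := hcon
    obtain ⟨a, haA, haI⟩ : ∃ a ∈ A, a ∉ ofCarrier _ hcar := by
      by_contra hh; push_neg at hh; exact hnA hh
    obtain ⟨b, hbB, hbI⟩ : ∃ b ∈ B, b ∉ ofCarrier _ hcar := by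
      by_contra hh; push_neg at hh; exact hnB hh
    rw [mem_ofCarrier] at haI hbI
    simp only [Set.mem_sInter, not_forall] at haI hbI
    obtain ⟨s₁, hs₁c, ha1⟩ := haI
    obtain ⟨s₂, hs₂c, hb2⟩ := hbI
    -- take the smaller of the two
    obtain ⟨sm, hsmc, hasm, hbsm⟩ : ∃ sm ∈ c, a ∉ sm ∧ b ∉ sm := by
      rcases hchain.total hs₁c hs₂c with hle | hle
      · exact ⟨s₁, hs₁c, ha1, fun hb => hb2 (hle hb)⟩
      · exact ⟨s₂, hs₂c, fun ha => ha1 (hle ha), hb2⟩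
    obtain ⟨Pm, hPm, hpsm⟩ := hc sm hsmc
    have hABm : ∀ a' ∈ A, ∀ b' ∈ B, a' * b' ∈ Pm := by
      intro a' ha' b' hb'
      have := hAB a' ha' b' hb'
      rw [mem_ofCarrier] at this
      have := this sm hsmc
      rw [← hpsm] at this
      exact this
    rcases hPm.2 _ _ hABm with hle | hle
    · exact hasm (by rw [← hpsm]; exact hle haA)
    · exact hbsm (by rw [← hpsm]; exact hle hbB)

lemma exists_completelyPrime (h : IsTwoPrimalRing R) {x : R} (hx : ¬ IsNilpotent x) :
    ∃ P : TwoSidedIdeal R, IsCompletelyPrimeTwoSidedIdeal P ∧ x ∉ P := by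
  -- a prime ideal avoiding x
  have hx' : x ∉ ringPrimeRadical R := fun hmem => hx ((mem_rad_iff h).mpr hmem)
  rw [ringPrimeRadical, Set.mem_setOf_eq] at hx'
  push_neg at hx'
  obtain ⟨P₀, hP₀, hxP₀⟩ := hx'
  -- Zorn: minimal prime carrier below P₀
  obtain ⟨m, hmP₀, hmin⟩ := zorn_superset_nonempty
      {s : Set R | (∃ P : TwoSidedIdeal R, IsPrimeTwoSidedIdeal P ∧ (P : Set R) = s) ∧
        s ⊆ (P₀ : Set R)}
      (fun c hcS hchain hne => by
        obtain ⟨P, hP, hPc⟩ := chain_inter_prime (fun s hs => (hcS hs).1) hchain hne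
        obtain ⟨s₀, hs₀⟩ := hne
        exact ⟨⋂₀ c, ⟨⟨P, hP, hPc⟩,
          (Set.sInter_subset_of_mem hs₀).trans (hcS hs₀).2⟩,
          fun s hs => Set.sInter_subset_of_mem hs⟩)
      (P₀ : Set R) ⟨⟨P₀, hP₀, rfl⟩, subset_rfl⟩
  obtain ⟨⟨P, hP, hPm⟩, hmsub⟩ := hmin.prop
  have hxm : x ∉ m := fun hxm => hxP₀ (hmsub hxm)
  -- the m-system T
  set T : Set R := {t | MulClosure ((P : Set R))ᶜ t} with hT
  have hTnonnil : ∀ t ∈ T, ¬ IsNilpotent t := fun t ht => mulClosure_not_nil h hP ht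
  -- Zorn: maximal ideal carrier disjoint from T
  obtain ⟨m₂, _, hmax⟩ := zorn_subset_nonempty
      {s : Set R | IsIdealCarrier s ∧ ∀ t ∈ s, t ∉ T}
      (fun c hcS hchain hne => by
        obtain ⟨s₀, hs₀⟩ := hne
        refine ⟨⋃₀ c, ⟨⟨?_, ?_, ?_, ?_, ?_⟩, ?_⟩, fun s hs => Set.subset_sUnion_of_mem hs⟩
        · exact ⟨s₀, hs₀, (hcS hs₀).1.1⟩
        · rintro x y ⟨s₁, hs₁, hx1⟩ ⟨s₂, hs₂, hy2⟩
          rcases hchain.total hs₁ hs₂ with hle | hle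
          · exact ⟨s₂, hs₂, (hcS hs₂).1.2.1 (hle hx1) hy2⟩
          · exact ⟨s₁, hs₁, (hcS hs₁).1.2.1 hx1 (hle hy2)⟩
        · rintro x ⟨s₁, hs₁, hx1⟩
          exact ⟨s₁, hs₁, (hcS hs₁).1.2.2.1 hx1⟩
        · rintro x y ⟨s₁, hs₁, hy1⟩
          exact ⟨s₁, hs₁, (hcS hs₁).1.2.2.2.1 hy1⟩
        · rintro x y ⟨s₁, hs₁, hx1⟩
          exact ⟨s₁, hs₁, (hcS hs₁).1.2.2.2.2 hx1⟩
        · rintro t ⟨s₁, hs₁, ht1⟩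
          exact (hcS hs₁).2 t ht1)
      ({0} : Set R)
      ⟨⟨rfl, fun hx hy => by simp_all, fun hx => by simp_all,
        fun hy => by simp_all, fun hx => by simp_all⟩,
        by
          intro t ht htT
          rw [Set.mem_singleton_iff] at ht
          subst ht
          exact hTnonnil 0 htT ⟨1, by simp⟩⟩
  obtain ⟨hm₂car, hm₂T⟩ := hmax.prop
  set Q : TwoSidedIdeal R := ofCarrier m₂ hm₂car with hQ
  -- m₂ ⊆ P
  have hQP : m₂ ⊆ (P : Set R) := by
    intro y hy
    by_contra hyP
    exact hm₂T y hy (MulClosure.base hyP)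
  -- 1 ∈ T
  have h1T : (1 : R) ∈ T := MulClosure.base (one_not_mem_of_prime hP)
  -- Q is prime
  have hQprime : IsPrimeTwoSidedIdeal Q := by
    constructor
    · intro htop
      have : (1 : R) ∈ Q := htop ▸ TwoSidedIdeal.mem_top _
      rw [hQ, mem_ofCarrier] at this
      exact hm₂T 1 this h1T
    · intro A B hAB
      by_contra hcon
      push_neg at hcon
      obtain ⟨hnA, hnB⟩ := hcon
      obtain ⟨a, haA, haQ⟩ : ∃ a ∈ A, a ∉ Q := by
        by_contra hh; push_neg at hh; exact hnA hh
      obtain ⟨b, hbB, hbQ⟩ : ∃ b ∈ B, b ∉ Q := by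
        by_contra hh; push_neg at hh; exact hnB hh
      rw [hQ, mem_ofCarrier] at haQ hbQ
      -- the ideal carrier m₂ + spanI a
      have haug : ∀ z : R, z ∉ m₂ →
          IsIdealCarrier {y : R | ∃ q ∈ m₂, ∃ p ∈ spanI z, y = q + p} := by
        intro z _
        refine ⟨⟨0, hm₂car.1, 0, (spanI z).zero_mem, by simp⟩, ?_, ?_, ?_, ?_⟩
        · rintro u v ⟨q₁, hq₁, p₁, hp₁, rfl⟩ ⟨q₂, hq₂, p₂, hp₂, rfl⟩
          exact ⟨q₁ + q₂, hm₂car.2.1 hq₁ hq₂, p₁ + p₂, (spanI z).add_mem hp₁ hp₂, by abel⟩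
        · rintro u ⟨q₁, hq₁, p₁, hp₁, rfl⟩
          exact ⟨-q₁, hm₂car.2.2.1 hq₁, -p₁, (spanI z).neg_mem hp₁, by abel⟩
        · rintro u v ⟨q₁, hq₁, p₁, hp₁, rfl⟩
          exact ⟨u * q₁, hm₂car.2.2.2.1 hq₁, u * p₁, (spanI z).mul_mem_left _ _ hp₁,
            by noncomm_ring⟩
        · rintro u v ⟨q₁, hq₁, p₁, hp₁, rfl⟩
          exact ⟨q₁ * v, hm₂car.2.2.2.2 hq₁, p₁ * v, (spanI z).mul_mem_right _ _ hp₁,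
            by noncomm_ring⟩
      -- each augmented carrier meets T
      have hmeet : ∀ z : R, z ∉ m₂ →
          ∃ t ∈ T, ∃ q ∈ m₂, ∃ p ∈ spanI z, t = q + p := by
        intro z hz
        by_contra hh
        push_neg at hh
        have hzS : {y : R | ∃ q ∈ m₂, ∃ p ∈ spanI z, y = q + p} ∈
            {s : Set R | IsIdealCarrier s ∧ ∀ t ∈ s, t ∉ T} := by
          refine ⟨haug z hz, ?_⟩
          rintro t ⟨q, hq, p, hp, rfl⟩ htT
          exact hh _ htT q hq p hp rfl
        have hsub : m₂ ⊆ {y : R | ∃ q ∈ m₂, ∃ p ∈ spanI z, y = q + p} :=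
          fun y hy => ⟨y, hy, 0, (spanI z).zero_mem, by simp⟩
        have := hmax.le_of_ge hzS hsub
        exact hz (this ⟨0, hm₂car.1, z, mem_spanI_self z, by simp⟩)
      obtain ⟨t₁, ht₁T, q₁, hq₁, p₁, hp₁, rfl⟩ := hmeet a haQ
      obtain ⟨t₂, ht₂T, q₂, hq₂, p₂, hp₂, rfl⟩ := hmeet b hbQ
      have hTT : (q₁ + p₁) * (q₂ + p₂) ∈ T := MulClosure.mul ht₁T ht₂T
      have hprod : (q₁ + p₁) * (q₂ + p₂) ∈ m₂ := by
        have e : (q₁ + p₁) * (q₂ + p₂) = (q₁ * q₂ + q₁ * p₂ + p₁ * q₂) + p₁ * p₂ := by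
          noncomm_ring
        rw [e]
        have h1 : q₁ * q₂ ∈ m₂ := hm₂car.2.2.2.2 hq₁
        have h2 : q₁ * p₂ ∈ m₂ := hm₂car.2.2.2.2 hq₁
        have h3 : p₁ * q₂ ∈ m₂ := hm₂car.2.2.2.1 hq₂
        have h4 : p₁ * p₂ ∈ m₂ := by
          have hpa : p₁ ∈ A := spanI_le haA hp₁
          have hpb : p₂ ∈ B := spanI_le hbB hp₂
          have := hAB p₁ hpa p₂ hpb
          rw [hQ, mem_ofCarrier] at this
          exact this
        exact hm₂car.2.1 (hm₂car.2.1 (hm₂car.2.1 h1 h2) h3) h4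
      exact hm₂T _ hprod hTT
  -- by minimality, Q = P as carriers, so P is disjoint from T
  have hQeq : m₂ = m := by
    have hQS : m₂ ∈ {s : Set R | (∃ P' : TwoSidedIdeal R, IsPrimeTwoSidedIdeal P' ∧
        (P' : Set R) = s) ∧ s ⊆ (P₀ : Set R)} := by
      refine ⟨⟨Q, hQprime, coe_ofCarrier hm₂car⟩, ?_⟩
      exact hQP.trans (hPm ▸ hmsub)
    have hsub : m₂ ⊆ m := hPm ▸ hQP
    exact Set.Subset.antisymm hsub (hmin.2 hQS hsub)
  have hPT : ∀ t ∈ T, t ∉ (P : Set R) := by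
    intro t htT htP
    rw [hPm, ← hQeq] at htP
    exact hm₂T t htP htT
  -- P is completely prime
  refine ⟨P, ⟨hP.1, ?_⟩, fun hxP => hxm (hPm ▸ hxP)⟩
  intro a b hab
  by_contra hcon
  push_neg at hcon
  obtain ⟨haP, hbP⟩ := hcon
  have : a * b ∈ T := MulClosure.mul (MulClosure.base haP) (MulClosure.base hbP)
  exact hPT _ this hab

end StmtOneAux

end AuxProof

/-- if `R` is 2-primal then `β(R) = N(R) = E_R(0) = β_co(R)`. -/
theorem stmt1 (R : Type u) [Ring R] (h : IsTwoPrimalRing R) :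
    ringPrimeRadical R = {x : R | IsNilpotent x} ∧
    {x : R | IsNilpotent x} = ringEnvelopeZero R ∧
    ringEnvelopeZero R = ringCompletelyPrimeRadical R := by
  have hNE : {x : R | IsNilpotent x} ⊆ ringEnvelopeZero R := by
    intro x hx
    obtain ⟨n, hn⟩ := hx
    refine ⟨x, 1, n + 1, Nat.succ_pos n, ?_, by simp⟩
    rw [mul_one]
    rcases Nat.eq_zero_or_pos n with h0 | hpos
    · subst h0
      rw [zero_add, pow_one]
      have h10 : (1 : R) = 0 := by simpa using hn
      calc x = x * 1 := (mul_one x).symm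
        _ = x * 0 := by rw [h10]
        _ = 0 := mul_zero x
    · rw [pow_succ, hn, zero_mul]
  have hEco : ringEnvelopeZero R ⊆ ringCompletelyPrimeRadical R := by
    rintro x ⟨r, s, k, hk, hrs, rfl⟩ P hP
    have key : ∀ n : ℕ, r ^ n * s ∈ P → r ∈ P ∨ s ∈ P := by
      intro n
      induction n with
      | zero => intro hmem; right; simpa using hmem
      | succ m ih =>
        intro hmem
        rw [pow_succ'] at hmem
        rw [mul_assoc] at hmem
        rcases hP.2 r (r ^ m * s) hmem with hr | hrs'
        · exact Or.inl hr
        · exact ih hrs'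
    have h0 : r ^ k * s ∈ P := by rw [hrs]; exact P.zero_mem
    rcases key k h0 with hr | hs
    · exact P.mul_mem_right _ _ hr
    · exact P.mul_mem_left _ _ hs
  have hcoN : ringCompletelyPrimeRadical R ⊆ {x : R | IsNilpotent x} := by
    intro x hx
    by_contra hnx
    obtain ⟨P, hP, hxP⟩ := StmtOneAux.exists_completelyPrime h hnx
    exact hxP (hx P hP)
  refine ⟨h.symm, ?_, ?_⟩
  · exact Set.Subset.antisymm hNE (hEco.trans hcoN)
  · exact Set.Subset.antisymm hEco (hcoN.trans hNE)
end

section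
/- Let R be an associative unital ring and M a left R-module. If the prime radical β(M) is a completely prime submodule of M, then M is a 2-primal module, i.e., β(M) = β_co(M). -/
universe u v w

lemma cp_prime {R : Type u} [Ring R] {M : Type v} [AddCommGroup M] [Module R M]
    {P : Submodule R M} (h : IsCompletelyPrimeSubmodule P) : IsPrimeSubmodule P := by
  refine ⟨h.1, fun A N hAN => ?_⟩
  by_cases hN : N ≤ P
  · exact Or.inl hN
  · right
    obtain ⟨n, hn, hnP⟩ := Set.not_subset.1 hN
    intro a ha m
    rcases h.2 a n (hAN a ha n hn) with h1 | h1
    · exact absurd h1 hnP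
    · exact h1 m

/-- if the prime radical `β(M)` is a completely prime submodule of `M`,
then `M` is 2-primal, i.e. `β(M) = β_co(M)`. -/
theorem stmt2 {R : Type u} [Ring R] {M : Type v} [AddCommGroup M] [Module R M]
    (h : IsCompletelyPrimeSubmodule (primeRadicalOf (⊥ : Submodule R M))) :
    primeRadicalOf (⊥ : Submodule R M) = cPrimeRadicalOf (⊥ : Submodule R M) := by
  apply le_antisymm
  · apply le_sInf
    rintro P ⟨hP, -⟩
    exact sInf_le ⟨cp_prime hP, bot_le⟩
  · exact sInf_le ⟨h, bot_le⟩
end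

section
/- Let R be an associative unital ring, M a left R-module and N a proper submodule of M. Then E_M(N) = N (as sets) if and only if N is a completely semiprime submodule of M. -/
universe u v w

/-- for a proper submodule `N` of `M`, `E_M(N) = N` (as sets) iff `N` is a
completely semiprime submodule of `M`. -/
theorem stmt4 {R : Type u} [Ring R] {M : Type v} [AddCommGroup M] [Module R M]
    (N : Submodule R M) (hN : N ≠ ⊤) :
    envelope N = (N : Set M) ↔ IsCompletelySemiprimeSubmodule N := by
  constructor
  · intro hE
    refine ⟨hN, fun a m h => ?_⟩
    have : a • m ∈ envelope N := ⟨a, m, 2, by norm_num, by simpa [pow_two] using h, rfl⟩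
    rwa [hE] at this
  · rintro ⟨-, hsp⟩
    ext x
    constructor
    · rintro ⟨r, m, k, hk, hmem, rfl⟩
      clear hN
      induction k using Nat.strong_induction_on with
      | _ k ih =>
        rcases Nat.lt_or_ge k 2 with hlt | hge
        · interval_cases k
          · simpa using hmem
        · have h2 : (r ^ (k-1) * r ^ (k-1)) • m ∈ N := by
            have : r ^ (k-1) * r ^ (k-1) = r ^ (k-2) * r ^ k := by
              rw [← pow_add, ← pow_add]; congr 1; omega
            rw [this, mul_smul]
            exact N.smul_mem _ hmem
          have h3 : r ^ (k-1) • m ∈ N := hsp _ _ h2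
          exact ih (k-1) (by omega) (by omega) h3
    · intro hx
      exact ⟨1, x, 1, one_pos, by simpa using hx, by simp⟩
end

section
/- For any left module M over an associative unital ring R, the inclusions N_s(M) ⊆ ⟨E_M(0)⟩ ⊆ β_co(M) hold. -/
universe u v w

/-!
A strongly nilpotent element is a sum of terms `a • m` such that the sequence of repeated squares
`a, a², a⁴, …` is admissible, hence `a ^ 2 ^ k • m = 0` for some `k`: each term lies in `E_M(0)`.
If `P` is completely prime and `r ^ (k + 1) • m ∈ P`, then peeling off one factor `r` at a time
either gives `r • M ⊆ P` or reaches `r • m ∈ P`; so `E_M(P) ⊆ P`, and `E_M(0) ⊆ E_M(P)`.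
-/

section Envelope

variable {R : Type u} [Ring R] {M : Type v} [AddCommGroup M] [Module R M]

theorem envelope_mono {N N' : Submodule R M} (h : N ≤ N') : envelope N ⊆ envelope N' :=
  fun _ ⟨r, m, k, hk, hmem, hx⟩ => ⟨r, m, k, hk, h hmem, hx⟩

theorem IsCompletelyPrimeSubmodule.smul_mem_of_pow_succ_smul_mem {P : Submodule R M}
    (hP : IsCompletelyPrimeSubmodule P) {r : R} {m : M} :
    ∀ k : ℕ, r ^ (k + 1) • m ∈ P → r • m ∈ P
  | 0, h => by rwa [zero_add, pow_one] at h
  | k + 1, h => by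
    rw [pow_succ', mul_smul] at h
    exact (hP.2 r _ h).elim (smul_mem_of_pow_succ_smul_mem hP k) (· m)

theorem IsCompletelyPrimeSubmodule.envelope_subset {P : Submodule R M}
    (hP : IsCompletelyPrimeSubmodule P) : envelope P ⊆ P := by
  rintro _ ⟨r, m, k, hk, hmem, rfl⟩
  obtain ⟨k, rfl⟩ := Nat.exists_eq_add_one_of_ne_zero hk.ne'
  exact hP.smul_mem_of_pow_succ_smul_mem k hmem

theorem span_envelope_le_cPrimeRadicalOf (N : Submodule R M) :
    Submodule.span R (envelope N) ≤ cPrimeRadicalOf N := by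
  refine Submodule.span_le.2 fun x hx => Submodule.mem_sInf.2 ?_
  rintro P ⟨hP, hNP⟩
  exact hP.envelope_subset (envelope_mono hNP hx)

theorem IsStronglyNilpotent.mem_span_envelope_bot {m : M} (hm : IsStronglyNilpotent R m) :
    m ∈ Submodule.span R (envelope (⊥ : Submodule R M)) := by
  obtain ⟨r, a, mi, rfl, hnil⟩ := hm
  refine Submodule.sum_mem _ fun i _ => Submodule.subset_span ?_
  obtain ⟨k, hk⟩ := hnil i (fun n => a i ^ 2 ^ n) (by simp) fun n =>
    ⟨1, by rw [mul_one, ← pow_add, pow_succ, mul_two]⟩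
  exact ⟨a i, mi i, 2 ^ k, by positivity, by simpa using hk 1, rfl⟩

end Envelope

/-- for any module `M`, `N_s(M) ⊆ ⟨E_M(0)⟩ ⊆ β_co(M)`. -/
theorem stmt5 {R : Type u} [Ring R] {M : Type v} [AddCommGroup M] [Module R M] :
    stronglyNilpotentSet R M ⊆
      (Submodule.span R (envelope (⊥ : Submodule R M)) : Set M) ∧
    Submodule.span R (envelope (⊥ : Submodule R M)) ≤
      cPrimeRadicalOf (⊥ : Submodule R M) :=
  ⟨fun _ hm => IsStronglyNilpotent.mem_span_envelope_bot hm, span_envelope_le_cPrimeRadicalOf ⊥⟩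
end

section
/- Let φ : M → M' be a surjective homomorphism of left R-modules and let N be a submodule of M with ker φ ⊆ N. If β_co^s(N) = ⟨E_M(N)⟩, then β_co^s(φ(N)) = ⟨E_{M'}(φ(N))⟩. -/
universe u v w

/-- if `φ : M → M'` is surjective, `ker φ ⊆ N` and `β_co^s(N) = ⟨E_M(N)⟩`,
then `β_co^s(φ(N)) = ⟨E_{M'}(φ(N))⟩`. -/
theorem stmt7 {R : Type u} [Ring R] {M : Type v} [AddCommGroup M] [Module R M]
    {M' : Type w} [AddCommGroup M'] [Module R M']
    (φ : M →ₗ[R] M') (hφ : Function.Surjective φ)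
    (N : Submodule R M) (hker : LinearMap.ker φ ≤ N)
    (h : cPrimeRadicalOf N = Submodule.span R (envelope N)) :
    cPrimeRadicalOf (N.map φ) = Submodule.span R (envelope (N.map φ)) := by

  -- Step 1: envelope correspondence
  have henv : envelope (N.map φ) = φ '' envelope N := by
    ext x
    constructor
    · rintro ⟨r, m', k, hk, hmem, rfl⟩
      obtain ⟨m, rfl⟩ := hφ m'
      rw [← map_smul] at hmem
      obtain ⟨n, hn, heq⟩ := hmem
      have hker' : n - r ^ k • m ∈ LinearMap.ker φ := by
        simp [LinearMap.mem_ker, map_sub, heq]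
      have hmemN : r ^ k • m ∈ N := by
        have := sub_mem hn (hker hker')
        simpa using this
      exact ⟨r • m, ⟨r, m, k, hk, hmemN, rfl⟩, (map_smul φ r m)⟩
    · rintro ⟨x, ⟨r, m, k, hk, hmem, rfl⟩, rfl⟩
      exact ⟨r, φ m, k, hk, by rw [← map_smul]; exact Submodule.mem_map_of_mem hmem,
        (map_smul φ r m)⟩
  -- completely prime transfers along comap
  have hcp_comap : ∀ P' : Submodule R M', IsCompletelyPrimeSubmodule P' →
      IsCompletelyPrimeSubmodule (P'.comap φ) := by
    rintro P' ⟨hne, hcp⟩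
    constructor
    · intro htop
      apply hne
      rw [eq_top_iff]
      intro x _
      obtain ⟨y, rfl⟩ := hφ x
      have : y ∈ P'.comap φ := htop ▸ Submodule.mem_top
      exact this
    · intro r m hm
      have : r • φ m ∈ P' := by rw [← map_smul]; exact hm
      rcases hcp r (φ m) this with h1 | h2
      · exact Or.inl h1
      · refine Or.inr fun m'' => ?_
        show φ (r • m'') ∈ P'
        rw [map_smul]; exact h2 (φ m'')
  -- Step 2: set of completely prime submodules ≥ N is comap image
  have hset : {P : Submodule R M | IsCompletelyPrimeSubmodule P ∧ N ≤ P}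
      = (Submodule.comap φ) ''
        {P' : Submodule R M' | IsCompletelyPrimeSubmodule P' ∧ N.map φ ≤ P'} := by
    ext P
    constructor
    · rintro ⟨⟨hne, hcp⟩, hNP⟩
      have hkerP : LinearMap.ker φ ≤ P := le_trans hker hNP
      have hcm : (P.map φ).comap φ = P := by
        rw [Submodule.comap_map_eq, sup_eq_left.mpr hkerP]
      refine ⟨P.map φ, ⟨⟨?_, ?_⟩, Submodule.map_mono hNP⟩, hcm⟩
      · intro htop
        apply hne
        rw [← hcm, htop, Submodule.comap_top]
      · intro r m' hm'
        obtain ⟨m, rfl⟩ := hφ m'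
        have : r • m ∈ P := by
          rw [← hcm]; show φ (r • m) ∈ P.map φ; rw [map_smul]; exact hm'
        rcases hcp r m this with h1 | h2
        · exact Or.inl (Submodule.mem_map_of_mem h1)
        · refine Or.inr fun m'' => ?_
          obtain ⟨y, rfl⟩ := hφ m''
          rw [← map_smul]
          exact Submodule.mem_map_of_mem (h2 y)
    · rintro ⟨P', ⟨hcp', hNP'⟩, rfl⟩
      refine ⟨hcp_comap P' hcp', fun n hn => ?_⟩
      exact hNP' (Submodule.mem_map_of_mem hn)
  -- Step 3: radical transfers
  have hrad : cPrimeRadicalOf (N.map φ) = Submodule.map φ (cPrimeRadicalOf N) := by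
    unfold cPrimeRadicalOf
    rw [hset]
    have hcomap : sInf ((Submodule.comap φ) ''
        {P' : Submodule R M' | IsCompletelyPrimeSubmodule P' ∧ N.map φ ≤ P'})
        = Submodule.comap φ (sInf {P' : Submodule R M' |
            IsCompletelyPrimeSubmodule P' ∧ N.map φ ≤ P'}) := by
      ext x
      simp only [Submodule.mem_sInf, Submodule.mem_comap, Set.mem_image,
        Set.mem_setOf_eq]
      constructor
      · intro hx P' hP'
        exact hx _ ⟨P', hP', rfl⟩
      · rintro hx P ⟨P', hP', rfl⟩
        exact hx P' hP'
    rw [hcomap, Submodule.map_comap_eq_of_surjective hφ]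
  rw [hrad, h, Submodule.map_span, henv]
end

section
/- Let φ : M → M' be a surjective homomorphism of left R-modules and let N' be a submodule of M'. If β_co^s(N') = ⟨E_{M'}(N')⟩, then β_co^s(φ^{-1}(N')) = ⟨E_M(φ^{-1}(N'))⟩. -/
universe u v w

section Aux

variable {R : Type u} [Ring R] {M : Type v} [AddCommGroup M] [Module R M]
    {M' : Type w} [AddCommGroup M'] [Module R M']

lemma subset_envelope (N : Submodule R M) : (N : Set M) ⊆ envelope N := by
  intro n hn
  exact ⟨1, n, 1, Nat.one_pos, by simpa using hn, by simp⟩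

lemma aux_comap_cp (φ : M →ₗ[R] M') (hφ : Function.Surjective φ) {P' : Submodule R M'}
    (hP' : IsCompletelyPrimeSubmodule P') : IsCompletelyPrimeSubmodule (P'.comap φ) := by
  obtain ⟨hne, hcp⟩ := hP'
  refine ⟨?_, ?_⟩
  · intro htop
    apply hne
    rw [Submodule.eq_top_iff']
    intro x
    obtain ⟨y, rfl⟩ := hφ x
    have : y ∈ P'.comap φ := htop ▸ Submodule.mem_top
    exact this
  · intro r m hm
    rcases hcp r (φ m) (by simpa using hm) with h | h
    · exact Or.inl h
    · exact Or.inr fun m'' => by simpa using h (φ m'')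

lemma aux_map_cp (φ : M →ₗ[R] M') (hφ : Function.Surjective φ) {P : Submodule R M}
    (hker : LinearMap.ker φ ≤ P) (hP : IsCompletelyPrimeSubmodule P) :
    IsCompletelyPrimeSubmodule (P.map φ) := by
  obtain ⟨hne, hcp⟩ := hP
  have hcm : (P.map φ).comap φ = P := by
    rw [Submodule.comap_map_eq, sup_eq_left.mpr hker]
  refine ⟨?_, ?_⟩
  · intro htop
    apply hne
    rw [← hcm, htop, Submodule.comap_top]
  · intro r m' hm'
    obtain ⟨m, rfl⟩ := hφ m'
    have : r • m ∈ P := by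
      rw [← hcm]; simpa using hm'
    rcases hcp r m this with h | h
    · exact Or.inl ⟨m, h, rfl⟩
    · refine Or.inr fun m'' => ?_
      obtain ⟨m₀, rfl⟩ := hφ m''
      exact ⟨r • m₀, h m₀, by simp⟩

lemma aux_radical (φ : M →ₗ[R] M') (hφ : Function.Surjective φ) (N' : Submodule R M') :
    cPrimeRadicalOf (N'.comap φ) = (cPrimeRadicalOf N').comap φ := by
  have hker : LinearMap.ker φ ≤ N'.comap φ := by
    intro x hx
    simp only [Submodule.mem_comap]
    rw [LinearMap.mem_ker.mp hx]
    exact N'.zero_mem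
  apply le_antisymm
  · -- sInf S ≤ comap (sInf S')
    intro x hx
    simp only [Submodule.mem_comap]
    rw [cPrimeRadicalOf, Submodule.mem_sInf]
    intro P' hP'
    have : N'.comap φ ≤ P'.comap φ := Submodule.comap_mono hP'.2
    have hmem : P'.comap φ ∈ {P : Submodule R M | IsCompletelyPrimeSubmodule P ∧ N'.comap φ ≤ P} :=
      ⟨aux_comap_cp φ hφ hP'.1, this⟩
    exact (Submodule.mem_sInf.mp hx) _ hmem
  · -- comap (sInf S') ≤ sInf S
    rw [cPrimeRadicalOf]
    apply le_sInf
    rintro P ⟨hPcp, hPle⟩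
    have hkerP : LinearMap.ker φ ≤ P := le_trans hker hPle
    have hmap : IsCompletelyPrimeSubmodule (P.map φ) := aux_map_cp φ hφ hkerP hPcp
    have hN' : N' ≤ P.map φ := by
      intro x hx
      obtain ⟨y, rfl⟩ := hφ x
      exact ⟨y, hPle hx, rfl⟩
    have h1 : cPrimeRadicalOf N' ≤ P.map φ := sInf_le ⟨hmap, hN'⟩
    have hcm : (P.map φ).comap φ = P := by
      rw [Submodule.comap_map_eq, sup_eq_left.mpr hkerP]
    calc (cPrimeRadicalOf N').comap φ ≤ (P.map φ).comap φ := Submodule.comap_mono h1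
      _ = P := hcm

lemma aux_env_image (φ : M →ₗ[R] M') (hφ : Function.Surjective φ) (N' : Submodule R M') :
    φ '' envelope (N'.comap φ) = envelope N' := by
  ext x
  constructor
  · rintro ⟨y, ⟨r, m, k, hk, hmem, rfl⟩, rfl⟩
    exact ⟨r, φ m, k, hk, by simpa using hmem, by simp⟩
  · rintro ⟨r, m', k, hk, hmem, rfl⟩
    obtain ⟨m, rfl⟩ := hφ m'
    exact ⟨r • m, ⟨r, m, k, hk, by simpa using hmem, rfl⟩, by simp⟩

lemma aux_span (φ : M →ₗ[R] M') (hφ : Function.Surjective φ) (N' : Submodule R M') :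
    Submodule.span R (envelope (N'.comap φ)) = (Submodule.span R (envelope N')).comap φ := by
  have hker : LinearMap.ker φ ≤ N'.comap φ := by
    intro x hx
    simp only [Submodule.mem_comap]
    rw [LinearMap.mem_ker.mp hx]
    exact N'.zero_mem
  have hmapspan : (Submodule.span R (envelope (N'.comap φ))).map φ
      = Submodule.span R (envelope N') := by
    rw [Submodule.map_span, aux_env_image φ hφ]
  apply le_antisymm
  · rw [Submodule.span_le]
    rintro x ⟨r, m, k, hk, hmem, rfl⟩
    show r • m ∈ (Submodule.span R (envelope N')).comap φ
    simp only [Submodule.mem_comap, map_smul]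
    exact Submodule.subset_span ⟨r, φ m, k, hk, by simpa using hmem, rfl⟩
  · intro x hx
    simp only [Submodule.mem_comap] at hx
    rw [← hmapspan] at hx
    obtain ⟨y, hy, hxy⟩ := hx
    have hxyk : x - y ∈ LinearMap.ker φ := by
      rw [LinearMap.mem_ker, map_sub, hxy, sub_self]
    have : x - y ∈ Submodule.span R (envelope (N'.comap φ)) :=
      Submodule.subset_span (subset_envelope _ (hker hxyk))
    simpa using add_mem this hy

end Aux

/-- if `φ : M → M'` is surjective and `β_co^s(N') = ⟨E_{M'}(N')⟩`, then
`β_co^s(φ⁻¹(N')) = ⟨E_M(φ⁻¹(N'))⟩`. -/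
theorem stmt8 {R : Type u} [Ring R] {M : Type v} [AddCommGroup M] [Module R M]
    {M' : Type w} [AddCommGroup M'] [Module R M']
    (φ : M →ₗ[R] M') (hφ : Function.Surjective φ)
    (N' : Submodule R M')
    (h : cPrimeRadicalOf N' = Submodule.span R (envelope N')) :
    cPrimeRadicalOf (N'.comap φ) = Submodule.span R (envelope (N'.comap φ)) := by
  rw [aux_radical φ hφ N', aux_span φ hφ N', h]
end

section
/- Let R be an associative unital ring and M a left R-module. If M satisfies the complete radical formula, then every completely semiprime submodule of M is an intersection of completely prime submodules of M (equivalently, β_co^s(K) = K for every completely semiprime submodule K). Conversely, any submodule K of M that is an intersection of completely prime submodules of M satisfies the complete radical formula, i.e., ⟨E_M(K)⟩ = β_co^s(K) = K. -/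
universe u v w

section Aux

variable {R : Type u} [Ring R] {M : Type v} [AddCommGroup M] [Module R M]

lemma pow_descend (K : Submodule R M) (h : ∀ a : R, ∀ m : M, (a * a) • m ∈ K → a • m ∈ K) :
    ∀ k : ℕ, 0 < k → ∀ (r : R) (m : M), r ^ k • m ∈ K → r • m ∈ K := by
  intro k
  induction k using Nat.strong_induction_on with
  | _ k ih =>
    intro hk r m hm
    rcases Nat.lt_or_ge k 2 with h2 | h2
    · interval_cases k
      simpa using hm
    · have h1 : r ^ (k - 1) • m ∈ K := by
        have := h r (r ^ (k - 2) • m) ?_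
        · have e : r • (r ^ (k - 2) • m) = r ^ (k - 1) • m := by
            rw [smul_smul, ← pow_succ']
            congr 2
            omega
          rwa [e] at this
        · have e : (r * r) • (r ^ (k - 2) • m) = r ^ k • m := by
            rw [smul_smul]
            congr 1
            rw [← pow_two, ← pow_add]
            congr 1
            omega
          rwa [e]
      exact ih (k - 1) (by omega) (by omega) r m h1

lemma env_subset (K : Submodule R M) (h : ∀ a : R, ∀ m : M, (a * a) • m ∈ K → a • m ∈ K) :
    envelope K ⊆ (K : Set M) := by
  rintro x ⟨r, m, k, hk, hmem, rfl⟩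
  exact pow_descend K h k hk r m hmem

lemma subset_env (K : Submodule R M) : (K : Set M) ⊆ envelope K := by
  intro x hx
  exact ⟨1, x, 1, one_pos, by simpa using hx, by simp⟩

lemma le_cPrimeRadicalOf (K : Submodule R M) : K ≤ cPrimeRadicalOf K :=
  le_sInf fun _ hP => hP.2

lemma cprime_semiprime_cond (P : Submodule R M) (hP : IsCompletelyPrimeSubmodule P) :
    ∀ a : R, ∀ m : M, (a * a) • m ∈ P → a • m ∈ P := by
  intro a m hm
  rw [← smul_smul] at hm
  rcases hP.2 a (a • m) hm with h | h
  · exact h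
  · exact h m

end Aux

/-- if `M` satisfies the complete radical formula, then every completely
semiprime submodule `K` is an intersection of completely prime submodules
(equivalently `β_co^s(K) = K`); conversely, any submodule `K` that is an intersection of
completely prime submodules satisfies `⟨E_M(K)⟩ = β_co^s(K) = K`. -/
theorem stmt12 {R : Type u} [Ring R] {M : Type v} [AddCommGroup M] [Module R M] :
    ((∀ N : Submodule R M, Submodule.span R (envelope N) = cPrimeRadicalOf N) →
      ∀ K : Submodule R M, IsCompletelySemiprimeSubmodule K → cPrimeRadicalOf K = K) ∧
    (∀ K : Submodule R M,
      (∃ S : Set (Submodule R M), (∀ P ∈ S, IsCompletelyPrimeSubmodule P) ∧ K = sInf S) →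
      Submodule.span R (envelope K) = cPrimeRadicalOf K ∧ cPrimeRadicalOf K = K) := by
  constructor
  · intro hCRF K hK
    apply le_antisymm
    · rw [← hCRF K]
      rw [Submodule.span_le]
      exact env_subset K hK.2
    · exact le_cPrimeRadicalOf K
  · rintro K ⟨S, hS, rfl⟩
    have hsemi : ∀ a : R, ∀ m : M, (a * a) • m ∈ sInf S → a • m ∈ sInf S := by
      intro a m hm
      rw [Submodule.mem_sInf] at hm ⊢
      intro P hP
      exact cprime_semiprime_cond P (hS P hP) a m (hm P hP)
    have hrad : cPrimeRadicalOf (sInf S) = sInf S := by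
      apply le_antisymm
      · apply le_sInf
        intro P hP
        exact sInf_le (α := Submodule R M) ⟨hS P hP, sInf_le hP⟩
      · exact le_cPrimeRadicalOf _
    have hspan : Submodule.span R (envelope (sInf S)) = sInf S := by
      apply le_antisymm
      · rw [Submodule.span_le]
        exact env_subset _ hsemi
      · exact fun x hx => Submodule.subset_span (subset_env _ hx)
    exact ⟨hspan.trans hrad.symm, hrad⟩
end

section
/- Every semisimple 2-primal associative unital ring satisfies the complete radical formula: if R is a semisimple ring with N(R) = β(R), M is any left R-module and N any submodule of M, then ⟨E_M(N)⟩ = β_co^s(N). -/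
universe u v w

section AuxRing

variable {R : Type u} [Ring R]

/-- In a semisimple 2-primal ring, every nilpotent element is zero. -/
lemma aux_reduced (hss : IsSemisimpleRing R) (h2p : IsTwoPrimalRing R) :
    ∀ x : R, IsNilpotent x → x = 0 := by
  haveI := hss
  have hmem : ∀ z : R, IsNilpotent z ↔ z ∈ ringPrimeRadical R := fun z =>
    Set.ext_iff.mp h2p z
  set T : Ideal R :=
    { carrier := {x : R | IsNilpotent x}
      zero_mem' := ⟨1, by simp⟩
      add_mem' := by
        intro a b ha hb
        rw [Set.mem_setOf_eq, hmem] at ha hb ⊢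
        exact fun P hP => P.add_mem (ha P hP) (hb P hP)
      smul_mem' := by
        intro r x hx
        rw [Set.mem_setOf_eq, hmem] at hx ⊢
        exact fun P hP => by simpa [smul_eq_mul] using P.mul_mem_left r x (hx P hP) } with hT
  obtain ⟨e, he, hTe⟩ := IsSemisimpleRing.ideal_eq_span_idempotent T
  have heT : e ∈ T := hTe ▸ Submodule.mem_span_singleton_self e
  obtain ⟨n, hn⟩ := (show IsNilpotent e from heT)
  have he0 : e = 0 := by
    cases n with
    | zero =>
      have h1 : (1 : R) = 0 := by simpa using hn
      calc e = e * 1 := (mul_one e).symm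
        _ = e * 0 := by rw [h1]
        _ = 0 := mul_zero e
    | succ n => rw [he.pow_succ_eq] at hn; exact hn
  intro x hx
  have hxT : x ∈ T := hx
  rw [hTe, he0] at hxT
  obtain ⟨c, hc⟩ := Submodule.mem_span_singleton.mp hxT
  simpa using hc.symm

/-- A semisimple ring is von Neumann regular. -/
lemma aux_regular (hss : IsSemisimpleRing R) (a : R) : ∃ b : R, a = a * b * a := by
  haveI := hss
  obtain ⟨e, he, hspan⟩ := IsSemisimpleRing.ideal_eq_span_idempotent (Ideal.span {a})
  have hea : e ∈ Ideal.span ({a} : Set R) := by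
    rw [hspan]; exact Submodule.mem_span_singleton_self e
  obtain ⟨b, hb⟩ := Submodule.mem_span_singleton.mp hea
  have hae : a ∈ Ideal.span ({e} : Set R) := by
    rw [← hspan]; exact Submodule.mem_span_singleton_self a
  obtain ⟨c, hc⟩ := Submodule.mem_span_singleton.mp hae
  rw [smul_eq_mul] at hb hc
  have hae' : a * e = a := by
    calc a * e = c * e * e := by rw [hc]
      _ = c * (e * e) := by rw [mul_assoc]
      _ = c * e := by rw [he]
      _ = a := hc
  exact ⟨b, by rw [mul_assoc, hb, hae']⟩

/-- Idempotents are central in a reduced ring. -/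
lemma aux_central (hred : ∀ x : R, IsNilpotent x → x = 0) {e : R} (he : e * e = e) (x : R) :
    e * x = x * e := by
  have h1 : (e * x - e * x * e) * (e * x - e * x * e)
      = e * x * (e - e * e) * x - e * x * (e - e * e) * x * e := by noncomm_ring
  have h2 : (x * e - e * x * e) * (x * e - e * x * e)
      = x * (e - e * e) * x * e - e * x * (e - e * e) * x * e := by noncomm_ring
  rw [he, sub_self] at h1 h2
  simp only [mul_zero, zero_mul, sub_zero, sub_self] at h1 h2
  have h1' : e * x - e * x * e = 0 := hred _ ⟨2, by rw [pow_two]; exact h1⟩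
  have h2' : x * e - e * x * e = 0 := hred _ ⟨2, by rw [pow_two]; exact h2⟩
  rw [sub_eq_zero] at h1' h2'
  rw [h1', h2']

/-- In a semisimple 2-primal ring, `a ∈ R·aᵏ` for every `a` and `k ≥ 1`. -/
lemma aux_pow_factor (hss : IsSemisimpleRing R) (h2p : IsTwoPrimalRing R) :
    ∀ (a : R) (k : ℕ), 0 < k → ∃ t : R, a = t * a ^ k := by
  have hred := aux_reduced hss h2p
  intro a k hk
  obtain ⟨b, hb⟩ := aux_regular hss a
  have hf : (b * a) * (b * a) = b * a := by
    calc (b * a) * (b * a) = b * (a * b * a) := by noncomm_ring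
      _ = b * a := by rw [← hb]
  have hcf := aux_central hred hf
  have haf : a * (b * a) = a := by rw [← mul_assoc, ← hb]
  have claim : ∀ j : ℕ, b ^ j * a ^ (j + 1) = a := by
    intro j
    induction j with
    | zero => simp
    | succ j ih =>
      have h1 : b * a ^ (j + 2) = a ^ (j + 1) := by
        calc b * a ^ (j + 2) = (b * a) * a ^ (j + 1) := by
              rw [pow_succ' a (j + 1), ← mul_assoc]
          _ = a ^ (j + 1) * (b * a) := by rw [hcf]
          _ = a ^ j * (a * (b * a)) := by rw [pow_succ, mul_assoc]
          _ = a ^ j * a := by rw [haf]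
          _ = a ^ (j + 1) := (pow_succ a j).symm
      calc b ^ (j + 1) * a ^ (j + 2) = b ^ j * (b * a ^ (j + 2)) := by
            rw [pow_succ, mul_assoc]
        _ = b ^ j * a ^ (j + 1) := by rw [h1]
        _ = a := ih
  obtain ⟨j, rfl⟩ : ∃ j, k = j + 1 := ⟨k - 1, (Nat.succ_pred_eq_of_pos hk).symm⟩
  exact ⟨b ^ j, (claim j).symm⟩

end AuxRing

section AuxModule

variable {R : Type u} [Ring R] {M : Type v} [AddCommGroup M] [Module R M]

lemma aux_span_env (hpf : ∀ (a : R) (k : ℕ), 0 < k → ∃ t : R, a = t * a ^ k)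
    (N : Submodule R M) : Submodule.span R (envelope N) = N := by
  apply le_antisymm
  · rw [Submodule.span_le]
    rintro x ⟨r, m, k, hk, hmem, rfl⟩
    obtain ⟨t, ht⟩ := hpf r k hk
    have : r • m = t • (r ^ k • m) := by rw [← mul_smul, ← ht]
    show r • m ∈ N
    rw [this]
    exact N.smul_mem t hmem
  · intro n hn
    exact Submodule.subset_span ⟨1, n, 1, one_pos, by simpa using hn, by simp⟩

lemma aux_coatom_cp (hss : IsSemisimpleRing R)
    (hred : ∀ x : R, IsNilpotent x → x = 0) {P : Submodule R M}
    (hne : P ≠ ⊤) (hco : ∀ Q : Submodule R M, P < Q → Q = ⊤) :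
    IsCompletelyPrimeSubmodule P := by
  refine ⟨hne, fun r m hrm => ?_⟩
  by_cases hm : m ∈ P
  · exact Or.inl hm
  right
  obtain ⟨b, hb⟩ := aux_regular hss r
  have hf : (b * r) * (b * r) = b * r := by
    calc (b * r) * (b * r) = b * (r * b * r) := by noncomm_ring
      _ = b * r := by rw [← hb]
  have hcf := aux_central hred hf
  have hrf : r * (b * r) = r := by rw [← mul_assoc, ← hb]
  let L : M →ₗ[R] M :=
    { toFun := fun m' => (b * r) • m'
      map_add' := fun x y => smul_add _ x y
      map_smul' := fun s m' => by
        simp only [RingHom.id_apply]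
        rw [← mul_smul, hcf s, mul_smul] }
  set Q : Submodule R M := P.comap L with hQdef
  have hPQ : P ≤ Q := fun p hp => P.smul_mem (b * r) hp
  have hmQ : m ∈ Q := by
    show (b * r) • m ∈ P
    rw [mul_smul]
    exact P.smul_mem b hrm
  have hQtop : Q = ⊤ := by
    refine hco Q (lt_of_le_of_ne hPQ ?_)
    intro h
    exact hm (by rw [h]; exact hmQ)
  intro m'
  have hfm' : (b * r) • m' ∈ P := by
    have : m' ∈ Q := by rw [hQtop]; trivial
    exact this
  have : r • m' = r • ((b * r) • m') := by rw [← mul_smul, hrf]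
  rw [this]
  exact P.smul_mem r hfm'

lemma aux_crad (hss : IsSemisimpleRing R) (hred : ∀ x : R, IsNilpotent x → x = 0)
    (N : Submodule R M) : cPrimeRadicalOf N = N := by
  haveI := hss
  apply le_antisymm
  · intro x hx
    by_contra hxN
    set s : Set (Submodule R M) := {Q | N ≤ Q ∧ x ∉ Q} with hs
    have hchain : ∀ c ⊆ s, IsChain (· ≤ ·) c → ∀ y ∈ c, ∃ ub ∈ s, ∀ z ∈ c, z ≤ ub := by
      intro c hcs hch y hy
      refine ⟨sSup c, ⟨(hcs hy).1.trans (le_sSup hy), ?_⟩, fun z hz => le_sSup hz⟩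
      intro hxs
      obtain ⟨z, hz, hxz⟩ := (Submodule.mem_sSup_of_directed ⟨y, hy⟩ hch.directedOn).mp hxs
      exact (hcs hz).2 hxz
    obtain ⟨P, hNP, hPmax⟩ := zorn_le_nonempty₀ s hchain N ⟨le_rfl, hxN⟩
    have hPs : P ∈ s := hPmax.1
    have hne : P ≠ ⊤ := fun h => hPs.2 (by rw [h]; trivial)
    have hco : ∀ Q : Submodule R M, P < Q → Q = ⊤ := by
      intro Q hQ
      have hxQ : x ∈ Q := by
        by_contra hxQ
        exact hQ.not_ge (hPmax.2 ⟨hPs.1.trans hQ.le, hxQ⟩ hQ.le)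
      obtain ⟨C, hC⟩ := exists_isCompl Q
      have hCP : C ≤ P := by
        by_contra hCP
        have hlt : P < P ⊔ C := left_lt_sup.mpr hCP
        have hxPC : x ∈ P ⊔ C := by
          by_contra hxPC
          exact hlt.not_ge (hPmax.2 ⟨hPs.1.trans le_sup_left, hxPC⟩ le_sup_left)
        have hmem : x ∈ (P ⊔ C) ⊓ Q := Submodule.mem_inf.mpr ⟨hxPC, hxQ⟩
        rw [sup_inf_assoc_of_le C hQ.le, inf_comm, hC.inf_eq_bot, sup_bot_eq] at hmem
        exact hPs.2 hmem
      have hCbot : C = ⊥ := by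
        have : C ≤ Q ⊓ C := le_inf (hCP.trans hQ.le) le_rfl
        rw [hC.inf_eq_bot] at this
        exact le_bot_iff.mp this
      rw [← hC.sup_eq_top, hCbot, sup_bot_eq]
    have hcp := aux_coatom_cp hss hred hne hco
    exact hPs.2 ((Submodule.mem_sInf.mp hx) P ⟨hcp, hPs.1⟩)
  · exact le_sInf fun P hP => hP.2

end AuxModule

/-- a semisimple 2-primal ring satisfies the complete radical formula: for
any left `R`-module `M` and any submodule `N`, `⟨E_M(N)⟩ = β_co^s(N)`. -/
theorem stmt16 {R : Type u} [Ring R] (hss : IsSemisimpleRing R) (h2p : IsTwoPrimalRing R)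
    {M : Type v} [AddCommGroup M] [Module R M] (N : Submodule R M) :
    Submodule.span R (envelope N) = cPrimeRadicalOf N := by
  rw [aux_span_env (aux_pow_factor hss h2p) N, aux_crad hss (aux_reduced hss h2p) N]
end
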